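/- Let d, ε, χ, μ be positive real numbers, a := √(μχ²/(2dε(2d+χ))), and b ∈ ℝ. Define, for x with a·x + b > 0, ū(x) := (a·x + b)^(−2) and c̄(x) := (a·x + b)^(−2d/χ) (real power of the positive number a·x+b). Then for every x with a·x + b > 0: d·ū″(x) − χ·(ū·(log ∘ c̄)′)′(x) = 0 and ε·c̄″(x) − μ·ū(x)·c̄(x) = 0; that is, the pair (ū, c̄) is a steady state of the original Keller–Segel system with m = 1 exactly for degradation rate σ = 0. -/

import Mathlib

open Filter Real

lemma ks_nhds (a b x : ℝ) (hx : 0 < a * x + b) : ∀ᶠ y in nhds x, 0 < a * y + b := by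
  have : IsOpen {y : ℝ | 0 < a * y + b} :=
    isOpen_lt continuous_const (by continuity)
  exact this.mem_nhds hx

lemma ks_lin (a b x : ℝ) : HasDerivAt (fun y : ℝ => a * y + b) a x := by
  simpa using ((hasDerivAt_id x).const_mul a).add_const b

lemma ks_d1 (a b p : ℝ) : ∀ x : ℝ, 0 < a * x + b →
    deriv (fun y => (a * y + b) ^ p) x = p * a * (a * x + b) ^ (p - 1) := by
  intro x hx
  have h := (ks_lin a b x).rpow_const (p := p) (Or.inl hx.ne')
  rw [h.deriv]; ring

lemma ks_d2 (a b p : ℝ) (x : ℝ) (hx : 0 < a * x + b) :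
    deriv (deriv (fun y => (a * y + b) ^ p)) x
      = p * (p - 1) * a ^ 2 * (a * x + b) ^ (p - 2) := by
  have hev : deriv (fun y => (a * y + b) ^ p)
      =ᶠ[nhds x] fun y => p * a * (a * y + b) ^ (p - 1) :=
    (ks_nhds a b x hx).mono fun y hy => ks_d1 a b p y hy
  rw [hev.deriv_eq]
  have h := (((ks_lin a b x).rpow_const (p := p - 1) (Or.inl hx.ne')).const_mul (p * a)).deriv
  rw [h]; ring_nf

lemma ks_dlog (a b q : ℝ) (x : ℝ) (hx : 0 < a * x + b) :
    deriv (fun z => Real.log ((a * z + b) ^ q)) x = q * a / (a * x + b) := by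
  have hev : (fun z => Real.log ((a * z + b) ^ q))
      =ᶠ[nhds x] fun z => q * Real.log (a * z + b) :=
    (ks_nhds a b x hx).mono fun y hy => by simp only []; rw [Real.log_rpow hy]
  rw [hev.deriv_eq]
  have h := (((ks_lin a b x).log hx.ne').const_mul q).deriv
  rw [h]; ring

/-- The power-type steady state of the original Keller–Segel system with
`m = 1` corresponds to degradation rate `σ = 0`. -/
theorem stmt_17 (d ε χ μ : ℝ) (hd : 0 < d) (hε : 0 < ε) (hχ : 0 < χ) (hμ : 0 < μ)
    (a : ℝ) (ha : a = Real.sqrt (μ * χ ^ 2 / (2 * d * ε * (2 * d + χ))))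
    (b : ℝ)
    (ubar cbar : ℝ → ℝ)
    (hu : ubar = fun x => (a * x + b) ^ (-2 : ℝ))
    (hc : cbar = fun x => (a * x + b) ^ (-(2 * d / χ))) :
    ∀ x : ℝ, 0 < a * x + b →
      d * deriv (deriv ubar) x
        - χ * deriv (fun y => ubar y * deriv (fun z => Real.log (cbar z)) y) x = 0 ∧
      ε * deriv (deriv cbar) x - μ * ubar x * cbar x = 0 := by
  intro x hx
  set t := a * x + b with hT
  have ha2 : a ^ 2 = μ * χ ^ 2 / (2 * d * ε * (2 * d + χ)) := by
    rw [ha, sq_sqrt]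
    positivity
  constructor
  · -- first equation
    have hU : deriv (deriv ubar) x = (-2) * (-2 - 1) * a ^ 2 * t ^ (-2 - 2 : ℝ) := by
      rw [hu]; exact ks_d2 a b (-2) x hx
    have hmix : (fun y => ubar y * deriv (fun z => Real.log (cbar z)) y)
        =ᶠ[nhds x] fun y => (-(2 * d / χ) * a) * (a * y + b) ^ (-3 : ℝ) := by
      refine (ks_nhds a b x hx).mono fun y hy => ?_
      rw [hu, hc]
      simp only
      rw [ks_dlog a b (-(2 * d / χ)) y hy]
      have : (-3 : ℝ) = (-2) + (-1) := by norm_num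
      rw [this, Real.rpow_add hy, Real.rpow_neg_one]
      field_simp
    have hM : deriv (fun y => ubar y * deriv (fun z => Real.log (cbar z)) y) x
        = (-(2 * d / χ) * a) * ((-3) * a * t ^ (-3 - 1 : ℝ)) := by
      rw [hmix.deriv_eq]
      have h := (((ks_lin a b x).rpow_const (p := (-3)) (Or.inl hx.ne')).const_mul
        (-(2 * d / χ) * a)).deriv
      rw [h]; ring
    rw [hU, hM]
    have e1 : (-2 - 2 : ℝ) = -3 - 1 := by norm_num
    rw [e1]
    field_simp
    ring
  · -- second equation
    set q : ℝ := -(2 * d / χ) with hq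
    have hC : deriv (deriv cbar) x = q * (q - 1) * a ^ 2 * t ^ (q - 2 : ℝ) := by
      rw [hc]; exact ks_d2 a b q x hx
    have huc : μ * ubar x * cbar x = μ * t ^ (q - 2 : ℝ) := by
      rw [hu, hc]
      simp only
      have : (q - 2 : ℝ) = (-2) + q := by ring
      rw [this, Real.rpow_add hx]
      ring
    rw [hC, huc]
    have key : ε * (q * (q - 1)) * a ^ 2 = μ := by
      rw [ha2, hq]
      field_simp
      ring
    nlinarith [key, Real.rpow_pos_of_pos hx (q - 2)]
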